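/- arXiv:2501.15301 — 6 statements merged into one kernel-verified Lean document; each statement's English description precedes it below -/
import Mathlib

section
/- Assume s : 𝒳 → 𝒮 and t : 𝒴 → 𝒯 are given. Then the following are equivalent: (1) s and t are both sufficient (X−S−Y and X−T−Y); (2) for all x ∈ 𝒳 and y ∈ 𝒴, p(x,y)·pS(s(x))·pT(t(y)) = pX(x)·pY(y)·pST(s(x),t(y)) (equivalently, the density ratio p(x,y)/(pX(x)pY(y)) equals pST(s(x),t(y))/(pS(s(x))pT(t(y)))); (3) the Markov chain factorization X−S−T−Y holds: p(x,y) = (pX(x)/pS(s(x)))·pST(s(x),t(y))·(pY(y)/pT(t(y))) for all x,y. -/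
open Finset

noncomputable section
open scoped Classical

variable {𝒳 𝒴 𝒮 𝒯 : Type*}

/-- Marginal of a joint pmf on the first coordinate. -/
def margX [Fintype 𝒴] (p : 𝒳 × 𝒴 → ℝ) (x : 𝒳) : ℝ := ∑ y, p (x, y)

/-- Marginal of a joint pmf on the second coordinate. -/
def margY [Fintype 𝒳] (p : 𝒳 × 𝒴 → ℝ) (y : 𝒴) : ℝ := ∑ x, p (x, y)

/-- Distribution of `S = s(X)`. -/
def margS [Fintype 𝒳] [Fintype 𝒴] (p : 𝒳 × 𝒴 → ℝ) (s : 𝒳 → 𝒮) (s0 : 𝒮) : ℝ :=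
  ∑ x ∈ Finset.univ.filter (fun x => s x = s0), margX p x

/-- Distribution of `T = t(Y)`. -/
def margT [Fintype 𝒳] [Fintype 𝒴] (p : 𝒳 × 𝒴 → ℝ) (t : 𝒴 → 𝒯) (t0 : 𝒯) : ℝ :=
  ∑ y ∈ Finset.univ.filter (fun y => t y = t0), margY p y

/-- Joint distribution of `(S, T) = (s(X), t(Y))`. -/
def margST [Fintype 𝒳] [Fintype 𝒴] (p : 𝒳 × 𝒴 → ℝ) (s : 𝒳 → 𝒮) (t : 𝒴 → 𝒯)
    (w : 𝒮 × 𝒯) : ℝ :=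
  ∑ x ∈ Finset.univ.filter (fun x => s x = w.1),
    ∑ y ∈ Finset.univ.filter (fun y => t y = w.2), p (x, y)

/-- `q` is a probability mass function. -/
def IsPMF {Z : Type*} [Fintype Z] (q : Z → ℝ) : Prop := (∀ z, 0 ≤ q z) ∧ ∑ z, q z = 1

/-- `s` is a sufficient statistic of `X` for `Y` (Markov chain `X - S - Y`). -/
def SuffS [Fintype 𝒴] (p : 𝒳 × 𝒴 → ℝ) (s : 𝒳 → 𝒮) : Prop :=
  ∀ x x' y, s x = s x' → p (x, y) * margX p x' = p (x', y) * margX p x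

/-- `t` is a sufficient statistic of `Y` for `X` (Markov chain `X - T - Y`). -/
def SuffT [Fintype 𝒳] (p : 𝒳 × 𝒴 → ℝ) (t : 𝒴 → 𝒯) : Prop :=
  ∀ x y y', t y = t y' → p (x, y) * margY p y' = p (x, y') * margY p y

/-- Mutual information of a joint pmf on `A × B`. -/
def mutInfo {A B : Type*} [Fintype A] [Fintype B] (q : A × B → ℝ) : ℝ :=
  ∑ z : A × B, if 0 < q z then
    q z * Real.log (q z / ((∑ b, q (z.1, b)) * (∑ a, q (a, z.2)))) else 0

/-- Shannon entropy of a pmf on a finite type. -/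
def entropy {W : Type*} [Fintype W] (r : W → ℝ) : ℝ :=
  -∑ w, if 0 < r w then r w * Real.log (r w) else 0

/-- Wyner's common information of a joint pmf `m` on `A × B`. -/
def wynerCI {A B : Type*} [Fintype A] [Fintype B] (m : A × B → ℝ) : ℝ :=
  sInf { c | ∃ (n : ℕ) (q : A × B × Fin n → ℝ),
    IsPMF q ∧
    (∀ a b, ∑ w, q (a, b, w) = m (a, b)) ∧
    (∀ a b w, q (a, b, w) * (∑ a', ∑ b', q (a', b', w)) =
      (∑ b', q (a, b', w)) * (∑ a', q (a', b, w))) ∧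
    c = mutInfo (fun z : Fin n × (A × B) => q (z.2.1, z.2.2, z.1)) }

/-- Gács–Körner common information of a joint pmf `m` on `A × B`. -/
def gkCI {A B : Type*} [Fintype A] [Fintype B] (m : A × B → ℝ) : ℝ :=
  sSup { c | ∃ (n : ℕ) (f : A → Fin n) (g : B → Fin n),
    (∑ z : A × B, if f z.1 ≠ g z.2 then m z else 0) = 0 ∧
    c = entropy (fun w : Fin n =>
      ∑ a ∈ Finset.univ.filter (fun a => f a = w), ∑ b, m (a, b)) }

/-- Information-bottleneck Lagrangian value. -/
def ibL {A B : Type*} [Fintype A] [Fintype B] (m : A × B → ℝ) (β : ℝ) : ℝ :=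
  sInf { c | ∃ (n : ℕ) (r : A → Fin n → ℝ),
    (∀ a u, 0 ≤ r a u) ∧ (∀ a, ∑ u, r a u = 1) ∧
    c = mutInfo (fun z : Fin n × A => r z.2 z.1 * ∑ b, m (z.2, b))
        - β * mutInfo (fun z : Fin n × B => ∑ a, r a z.1 * m (a, z.2)) }

/-- Information-bottleneck curve. -/
def ibCurve {A B : Type*} [Fintype A] [Fintype B] (m : A × B → ℝ) (R : ℝ) : ℝ :=
  sSup { c | ∃ (n : ℕ) (r : A → Fin n → ℝ),
    (∀ a u, 0 ≤ r a u) ∧ (∀ a, ∑ u, r a u = 1) ∧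
    mutInfo (fun z : Fin n × A => r z.2 z.1 * ∑ b, m (z.2, b)) ≤ R ∧
    c = mutInfo (fun z : Fin n × B => ∑ a, r a z.1 * m (a, z.2)) }

/-!
Sufficiency of `s` says that `p (x, y) / pX x` depends on `x` only through `s x`; summing over
the fibre of `s` gives `p (x, y) · pS (s x) = pX x · P(S = s x, Y = y)`, and the same step in the
second coordinate, with `t`, gives (2). Conversely, (2) writes `p (x, y)` both as `pX x` times a
function of `(s x, y)` and as `pY y` times a function of `(x, t y)`, and either form is
sufficiency. (2) and (3) differ by the positive factors `pS (s x)` and `pT (t y)`.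
-/

theorem margS_pos [Fintype 𝒳] [Fintype 𝒴] (p : 𝒳 × 𝒴 → ℝ) (s : 𝒳 → 𝒮)
    (hX : ∀ x, 0 < margX p x) (x : 𝒳) : 0 < margS p s (s x) :=
  sum_pos (fun x' _ => hX x') ⟨x, by simp⟩

theorem margT_pos [Fintype 𝒳] [Fintype 𝒴] (p : 𝒳 × 𝒴 → ℝ) (t : 𝒴 → 𝒯)
    (hY : ∀ y, 0 < margY p y) (y : 𝒴) : 0 < margT p t (t y) :=
  sum_pos (fun y' _ => hY y') ⟨y, by simp⟩

theorem SuffS.mul_margS [Fintype 𝒳] [Fintype 𝒴] {p : 𝒳 × 𝒴 → ℝ} {s : 𝒳 → 𝒮}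
    (hs : SuffS p s) (x : 𝒳) (y : 𝒴) :
    p (x, y) * margS p s (s x) = margX p x * ∑ x' ∈ univ.filter (s · = s x), p (x', y) := by
  rw [margS, mul_sum, mul_sum]
  refine sum_congr rfl fun x' hx' => ?_
  rw [hs x x' y (mem_filter.1 hx').2.symm, mul_comm]

theorem SuffT.sum_mul_margT [Fintype 𝒳] [Fintype 𝒴] {p : 𝒳 × 𝒴 → ℝ} {t : 𝒴 → 𝒯}
    (ht : SuffT p t) (s : 𝒳 → 𝒮) (s0 : 𝒮) (y : 𝒴) :
    (∑ x' ∈ univ.filter (s · = s0), p (x', y)) * margT p t (t y)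
      = margY p y * margST p s t (s0, t y) := by
  rw [margT, margST, sum_mul_sum, mul_sum]
  refine sum_congr rfl fun x' _ => ?_
  rw [mul_sum]
  refine sum_congr rfl fun y' hy' => ?_
  rw [ht x' y y' (mem_filter.1 hy').2.symm, mul_comm]

theorem mul_margS_mul_margT_of_suff [Fintype 𝒳] [Fintype 𝒴] {p : 𝒳 × 𝒴 → ℝ}
    {s : 𝒳 → 𝒮} {t : 𝒴 → 𝒯} (hs : SuffS p s) (ht : SuffT p t) (x : 𝒳) (y : 𝒴) :
    p (x, y) * margS p s (s x) * margT p t (t y)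
      = margX p x * margY p y * margST p s t (s x, t y) := by
  rw [hs.mul_margS, mul_assoc, ht.sum_mul_margT, mul_assoc]

theorem suffS_of_eq_margX_mul [Fintype 𝒴] {p : 𝒳 × 𝒴 → ℝ} {s : 𝒳 → 𝒮} (g : 𝒮 → 𝒴 → ℝ)
    (hg : ∀ x y, p (x, y) = margX p x * g (s x) y) : SuffS p s := by
  intro x x' y hxx'
  rw [hg x y, hg x' y, hxx']
  ring

theorem suffT_of_eq_margY_mul [Fintype 𝒳] {p : 𝒳 × 𝒴 → ℝ} {t : 𝒴 → 𝒯} (g : 𝒳 → 𝒯 → ℝ)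
    (hg : ∀ x y, p (x, y) = margY p y * g x (t y)) : SuffT p t := by
  intro x y y' hyy'
  rw [hg x y, hg x y', hyy']
  ring

theorem mul_mul_eq_iff_eq_div_mul_mul {K : Type*} [Field K] {q a b u v w : K}
    (ha : a ≠ 0) (hb : b ≠ 0) : q * a * b = u * v * w ↔ q = u / a * w * (v / b) := by
  field_simp

theorem sufficiency_tfae_general
    [Fintype 𝒳] [Fintype 𝒴]
    (p : 𝒳 × 𝒴 → ℝ)
    (hX : ∀ x, 0 < margX p x) (hY : ∀ y, 0 < margY p y)
    (s : 𝒳 → 𝒮) (t : 𝒴 → 𝒯) :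
    ((SuffS p s ∧ SuffT p t) ↔
      (∀ x y, p (x, y) * margS p s (s x) * margT p t (t y)
        = margX p x * margY p y * margST p s t (s x, t y)))
    ∧
    ((∀ x y, p (x, y) * margS p s (s x) * margT p t (t y)
        = margX p x * margY p y * margST p s t (s x, t y)) ↔
      (∀ x y, p (x, y)
        = margX p x / margS p s (s x) * margST p s t (s x, t y)
          * (margY p y / margT p t (t y)))) := by
  have h23 := forall₂_congr fun x y =>
    mul_mul_eq_iff_eq_div_mul_mul (q := p (x, y)) (u := margX p x) (v := margY p y)
      (w := margST p s t (s x, t y)) (margS_pos p s hX x).ne' (margT_pos p t hY y).ne'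
  refine ⟨⟨fun ⟨hs, ht⟩ => mul_margS_mul_margT_of_suff hs ht, fun h => ?_⟩, h23⟩
  have hfactor := h23.1 h
  exact ⟨suffS_of_eq_margX_mul (fun s0 y => margST p s t (s0, t y) * margY p y
      / (margS p s s0 * margT p t (t y))) fun x y => by rw [hfactor x y]; ring,
    suffT_of_eq_margY_mul (fun x t0 => margX p x * margST p s t (s x, t0)
      / (margS p s (s x) * margT p t t0)) fun x y => by rw [hfactor x y]; ring⟩

/-- Equivalent characterizations of sufficiency of `s` and `t`. -/
theorem sufficiency_tfae
    [Fintype 𝒳] [Nonempty 𝒳] [Fintype 𝒴] [Nonempty 𝒴]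
    [Fintype 𝒮] [Nonempty 𝒮] [Fintype 𝒯] [Nonempty 𝒯]
    (p : 𝒳 × 𝒴 → ℝ) (hp : IsPMF p)
    (hX : ∀ x, 0 < margX p x) (hY : ∀ y, 0 < margY p y)
    (s : 𝒳 → 𝒮) (t : 𝒴 → 𝒯) :
    ((SuffS p s ∧ SuffT p t) ↔
      (∀ x y, p (x, y) * margS p s (s x) * margT p t (t y)
        = margX p x * margY p y * margST p s t (s x, t y)))
    ∧
    ((∀ x y, p (x, y) * margS p s (s x) * margT p t (t y)
        = margX p x * margY p y * margST p s t (s x, t y)) ↔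
      (∀ x y, p (x, y)
        = margX p x / margS p s (s x) * margST p s t (s x, t y)
          * (margY p y / margT p t (t y)))) :=
  sufficiency_tfae_general p hX hY s t

end
end

section
/- Let f : ℝ → ℝ be convex on [0,∞) with f(1) = 0. If s : 𝒳 → 𝒮 and t : 𝒴 → 𝒯 are both sufficient, then the f-information is preserved: ∑_{x,y} pX(x)·pY(y)·f( p(x,y)/(pX(x)·pY(y)) ) = ∑_{s0,t0} pS(s0)·pT(t0)·f( pST(s0,t0)/(pS(s0)·pT(t0)) ), where terms with pS(s0) = 0 or pT(t0) = 0 are taken to be 0. -/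
open Finset

noncomputable section
open scoped Classical

variable {𝒳 𝒴 𝒮 𝒯 : Type*}

/-! When both `s` and `t` are sufficient, the density ratio `p(x,y) / (pX(x) pY(y))` is constant
on every block `{s = s₀} × {t = t₀}`, where it equals `pST(s₀,t₀) / (pS(s₀) pT(t₀))`. Summing the
weights `pX(x) pY(y)` over a block gives `pS(s₀) pT(t₀)`, so the two sums agree block by block;
blocks with `pS(s₀) = 0` or `pT(t₀) = 0` are empty and contribute nothing on either side. -/

theorem sum_fiber_sum_mul {ι κ : Type*} [Fintype ι] [Fintype κ] (a : ι → ℝ) (g : ι → κ)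
    (h : κ → ℝ) :
    ∑ k, (∑ i ∈ univ.filter (fun i => g i = k), a i) * h k = ∑ i, a i * h (g i) := by
  simp_rw [sum_mul]
  rw [← sum_fiberwise univ g (fun i => a i * h (g i))]
  refine sum_congr rfl fun k _ => sum_congr rfl fun i hi => ?_
  rw [(mem_filter.mp hi).2]

section

variable [Fintype 𝒳] [Fintype 𝒴] {p : 𝒳 × 𝒴 → ℝ} {s : 𝒳 → 𝒮} {t : 𝒴 → 𝒯}

theorem sum_margX_mul_margY_comp [Fintype 𝒮] [Fintype 𝒯] (g : 𝒮 × 𝒯 → ℝ) :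
    ∑ z : 𝒳 × 𝒴, margX p z.1 * margY p z.2 * g (s z.1, t z.2)
      = ∑ w : 𝒮 × 𝒯, margS p s w.1 * margT p t w.2 * g w := by
  simp only [Fintype.sum_prod_type, mul_assoc, margS, margT, sum_fiber_sum_mul, ← mul_sum]

theorem SuffS.sum_fiber_mul_margX (hs : SuffS p s) (x : 𝒳) (y : 𝒴) :
    (∑ x' ∈ univ.filter (fun x' => s x' = s x), p (x', y)) * margX p x
      = p (x, y) * margS p s (s x) := by
  rw [margS, sum_mul, mul_sum]
  exact sum_congr rfl fun x' hx' => hs x' x y (mem_filter.mp hx').2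

theorem SuffT.sum_fiber_mul_margY (ht : SuffT p t) (x : 𝒳) (y : 𝒴) :
    (∑ y' ∈ univ.filter (fun y' => t y' = t y), p (x, y')) * margY p y
      = p (x, y) * margT p t (t y) := by
  rw [margT, sum_mul, mul_sum]
  exact sum_congr rfl fun y' hy' => ht x y' y (mem_filter.mp hy').2

theorem margST_mul_margX_mul_margY (hs : SuffS p s) (ht : SuffT p t) (x : 𝒳) (y : 𝒴) :
    margST p s t (s x, t y) * (margX p x * margY p y)
      = p (x, y) * (margS p s (s x) * margT p t (t y)) := by
  calc margST p s t (s x, t y) * (margX p x * margY p y)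
      = (∑ y' ∈ univ.filter (fun y' => t y' = t y),
          (∑ x' ∈ univ.filter (fun x' => s x' = s x), p (x', y')) * margX p x) * margY p y := by
        rw [margST, sum_comm, sum_mul, sum_mul]
        exact sum_congr rfl fun _ _ => by ring
    _ = margS p s (s x)
          * ((∑ y' ∈ univ.filter (fun y' => t y' = t y), p (x, y')) * margY p y) := by
        simp only [hs.sum_fiber_mul_margX, ← sum_mul]
        ring
    _ = p (x, y) * (margS p s (s x) * margT p t (t y)) := by
        rw [ht.sum_fiber_mul_margY]
        ring

theorem margS_apply_pos (hX : ∀ x, 0 < margX p x) (x : 𝒳) : 0 < margS p s (s x) :=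
  sum_pos (fun x' _ => hX x') ⟨x, mem_filter.mpr ⟨mem_univ x, rfl⟩⟩

theorem margT_apply_pos (hY : ∀ y, 0 < margY p y) (y : 𝒴) : 0 < margT p t (t y) :=
  sum_pos (fun y' _ => hY y') ⟨y, mem_filter.mpr ⟨mem_univ y, rfl⟩⟩

theorem density_ratio_eq_of_suff (hX : ∀ x, 0 < margX p x) (hY : ∀ y, 0 < margY p y)
    (hs : SuffS p s) (ht : SuffT p t) (x : 𝒳) (y : 𝒴) :
    p (x, y) / (margX p x * margY p y)
      = margST p s t (s x, t y) / (margS p s (s x) * margT p t (t y)) := by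
  rw [div_eq_div_iff (mul_pos (hX x) (hY y)).ne'
    (mul_pos (margS_apply_pos hX x) (margT_apply_pos hY y)).ne', margST_mul_margX_mul_margY hs ht]

end

theorem f_information_preserved_general
    [Fintype 𝒳] [Fintype 𝒴]
    [Fintype 𝒮] [Fintype 𝒯]
    (p : 𝒳 × 𝒴 → ℝ)
    (hX : ∀ x, 0 < margX p x) (hY : ∀ y, 0 < margY p y)
    (s : 𝒳 → 𝒮) (t : 𝒴 → 𝒯)
    (hs : SuffS p s) (ht : SuffT p t)
    (f : ℝ → ℝ) :
    (∑ z : 𝒳 × 𝒴,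
        margX p z.1 * margY p z.2 * f (p z / (margX p z.1 * margY p z.2)))
    = ∑ w : 𝒮 × 𝒯,
        if margS p s w.1 = 0 ∨ margT p t w.2 = 0 then 0
        else margS p s w.1 * margT p t w.2
          * f (margST p s t w / (margS p s w.1 * margT p t w.2)) := by
  set g : 𝒮 × 𝒯 → ℝ := fun w => f (margST p s t w / (margS p s w.1 * margT p t w.2))
  calc _ = ∑ z : 𝒳 × 𝒴, margX p z.1 * margY p z.2 * g (s z.1, t z.2) :=
        sum_congr rfl fun z _ => by rw [density_ratio_eq_of_suff hX hY hs ht]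
    _ = ∑ w : 𝒮 × 𝒯, margS p s w.1 * margT p t w.2 * g w := sum_margX_mul_margY_comp g
    _ = _ := sum_congr rfl fun w _ => by
        split_ifs with h
        · rcases h with h | h <;> simp [h]
        · rfl

/-- `f`-information is preserved under sufficient statistics. -/
theorem f_information_preserved
    [Fintype 𝒳] [Nonempty 𝒳] [Fintype 𝒴] [Nonempty 𝒴]
    [Fintype 𝒮] [Nonempty 𝒮] [Fintype 𝒯] [Nonempty 𝒯]
    (p : 𝒳 × 𝒴 → ℝ) (hp : IsPMF p)
    (hX : ∀ x, 0 < margX p x) (hY : ∀ y, 0 < margY p y)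
    (s : 𝒳 → 𝒮) (t : 𝒴 → 𝒯)
    (hs : SuffS p s) (ht : SuffT p t)
    (f : ℝ → ℝ) (hf : ConvexOn ℝ (Set.Ici 0) f) (hf1 : f 1 = 0) :
    (∑ z : 𝒳 × 𝒴,
        margX p z.1 * margY p z.2 * f (p z / (margX p z.1 * margY p z.2)))
    = ∑ w : 𝒮 × 𝒯,
        if margS p s w.1 = 0 ∨ margT p t w.2 = 0 then 0
        else margS p s w.1 * margT p t w.2
          * f (margST p s t w / (margS p s w.1 * margT p t w.2)) :=
  f_information_preserved_general p hX hY s t hs ht f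

end
end

section
/- If s : 𝒳 → 𝒮 and t : 𝒴 → 𝒯 are both sufficient, then the Gács–Körner common information is preserved: C_GK(p) = C_GK(pST). -/
open Finset

noncomputable section
open scoped Classical

variable {𝒳 𝒴 𝒮 𝒯 : Type*}

/-!
A pair `(f, g)` with `f X = g Y` almost surely agrees on the support of `p`. Sufficiency of `s`
makes the conditional laws of `Y` given `X = x` and `X = x'` equal when `s x = s x'`, so `x`
and `x'` share the `y`'s of their support and `f x = f x'`: `f` factors through `s`, and
likewise `g` through `t`. Conversely, a common function of `(S, T)` composed with `(s, t)` is
one of `(X, Y)` with the same law, so both suprema range over the same set of values.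
-/

section Pushforward

variable [Fintype 𝒳] [Fintype 𝒴] (p : 𝒳 × 𝒴 → ℝ) (s : 𝒳 → 𝒮) (t : 𝒴 → 𝒯)

theorem margST_eq_sum_filter (w : 𝒮 × 𝒯) :
    margST p s t w = ∑ z with Prod.map s t z = w, p z := by
  rw [margST, ← sum_product', ← filter_product, univ_product_univ]
  simp only [Prod.ext_iff, Prod.map_fst, Prod.map_snd]

variable [Fintype 𝒮] [Fintype 𝒯]

theorem sum_ite_margST (P : 𝒮 × 𝒯 → Prop) [DecidablePred P] :
    ∑ w, (if P w then margST p s t w else 0) = ∑ z, if P (s z.1, t z.2) then p z else 0 := by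
  rw [← sum_fiberwise univ (Prod.map s t)]
  refine sum_congr rfl fun w _ => ?_
  rw [margST_eq_sum_filter, ite_sum_zero]
  exact sum_congr rfl fun z hz => by rw [← (mem_filter.1 hz).2]; rfl

theorem sum_filter_margST {C : Type*} [DecidableEq C] (F : 𝒮 → C) (c : C) :
    ∑ a with F a = c, ∑ b, margST p s t (a, b) = ∑ x with F (s x) = c, ∑ y, p (x, y) := by
  rw [← sum_product', ← sum_product', ← filter_product_left, ← filter_product_left,
    univ_product_univ, univ_product_univ, sum_filter, sum_filter]
  exact sum_ite_margST p s t fun w => F w.1 = c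

end Pushforward

theorem eq_of_pos_of_sum_ite_ne_eq_zero {A B C : Type*} [Fintype A] [Fintype B] [DecidableEq C]
    {m : A × B → ℝ} (hm : ∀ z, 0 ≤ m z) {f : A → C} {g : B → C}
    (hfg : (∑ z, if f z.1 ≠ g z.2 then m z else 0) = 0) {z : A × B} (hz : 0 < m z) :
    f z.1 = g z.2 := by
  by_contra hne
  have hz0 := (sum_eq_zero_iff_of_nonneg fun w _ => ite_nonneg (hm w) le_rfl).1 hfg z (mem_univ z)
  rw [if_pos hne] at hz0
  exact hz.ne' hz0

section Sufficiency

variable {p : 𝒳 × 𝒴 → ℝ}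

theorem SuffS.pos_of_pos [Fintype 𝒴] {s : 𝒳 → 𝒮} (hs : SuffS p s) (hX : ∀ x, 0 < margX p x)
    {x x' : 𝒳} {y : 𝒴} (hxx' : s x = s x') (hxy : 0 < p (x, y)) : 0 < p (x', y) :=
  pos_of_mul_pos_left (hs x x' y hxx' ▸ mul_pos hxy (hX x')) (hX x).le

theorem SuffT.pos_of_pos [Fintype 𝒳] {t : 𝒴 → 𝒯} (ht : SuffT p t) (hY : ∀ y, 0 < margY p y)
    {x : 𝒳} {y y' : 𝒴} (hyy' : t y = t y') (hxy : 0 < p (x, y)) : 0 < p (x, y') :=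
  pos_of_mul_pos_left (ht x y y' hyy' ▸ mul_pos hxy (hY y')) (hY y).le

variable [Fintype 𝒳] [Fintype 𝒴] {C : Type*} [DecidableEq C] {f : 𝒳 → C} {g : 𝒴 → C}

theorem SuffS.factorsThrough_of_sum_ite_ne_eq_zero {s : 𝒳 → 𝒮} (hs : SuffS p s)
    (hp : ∀ z, 0 ≤ p z) (hX : ∀ x, 0 < margX p x)
    (hfg : (∑ z, if f z.1 ≠ g z.2 then p z else 0) = 0) : Function.FactorsThrough f s := by
  intro x x' hxx'
  obtain ⟨y, -, hxy⟩ := exists_lt_of_sum_lt (s := univ) (f := 0) (g := fun y => p (x, y))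
    (by simpa [margX] using hX x)
  exact (eq_of_pos_of_sum_ite_ne_eq_zero hp hfg hxy).trans
    (eq_of_pos_of_sum_ite_ne_eq_zero hp hfg (hs.pos_of_pos hX hxx' hxy)).symm

theorem SuffT.factorsThrough_of_sum_ite_ne_eq_zero {t : 𝒴 → 𝒯} (ht : SuffT p t)
    (hp : ∀ z, 0 ≤ p z) (hY : ∀ y, 0 < margY p y)
    (hfg : (∑ z, if f z.1 ≠ g z.2 then p z else 0) = 0) : Function.FactorsThrough g t := by
  intro y y' hyy'
  obtain ⟨x, -, hxy⟩ := exists_lt_of_sum_lt (s := univ) (f := 0) (g := fun x => p (x, y))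
    (by simpa [margY] using hY y)
  exact (eq_of_pos_of_sum_ite_ne_eq_zero hp hfg hxy).symm.trans
    (eq_of_pos_of_sum_ite_ne_eq_zero hp hfg (ht.pos_of_pos hY hyy' hxy))

end Sufficiency

theorem gacsKorner_preserved_general
    [Fintype 𝒳] [Nonempty 𝒳] [Fintype 𝒴] [Nonempty 𝒴]
    [Fintype 𝒮] [Fintype 𝒯]
    (p : 𝒳 × 𝒴 → ℝ) (hp : IsPMF p)
    (hX : ∀ x, 0 < margX p x) (hY : ∀ y, 0 < margY p y)
    (s : 𝒳 → 𝒮) (t : 𝒴 → 𝒯)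
    (hs : SuffS p s) (ht : SuffT p t) :
    gkCI p = gkCI (margST p s t) := by
  unfold gkCI
  congr 1
  ext c
  constructor
  · rintro ⟨n, f, g, hfg, rfl⟩
    obtain ⟨F, rfl⟩ : ∃ F : 𝒮 → Fin n, F ∘ s = f :=
      ⟨_, (hs.factorsThrough_of_sum_ite_ne_eq_zero hp.1 hX hfg).extend_comp
        fun _ => f (Classical.arbitrary 𝒳)⟩
    obtain ⟨G, rfl⟩ : ∃ G : 𝒯 → Fin n, G ∘ t = g :=
      ⟨_, (ht.factorsThrough_of_sum_ite_ne_eq_zero hp.1 hY hfg).extend_comp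
        fun _ => g (Classical.arbitrary 𝒴)⟩
    exact ⟨n, F, G, (sum_ite_margST p s t _).trans hfg,
      by simp only [sum_filter_margST, Function.comp_apply]⟩
  · rintro ⟨n, F, G, hFG, rfl⟩
    exact ⟨n, F ∘ s, G ∘ t, (sum_ite_margST p s t _).symm.trans hFG,
      by simp only [sum_filter_margST, Function.comp_apply]⟩

/-- Gács–Körner common information is preserved under sufficient
statistics. -/
theorem gacsKorner_preserved
    [Fintype 𝒳] [Nonempty 𝒳] [Fintype 𝒴] [Nonempty 𝒴]
    [Fintype 𝒮] [Nonempty 𝒮] [Fintype 𝒯] [Nonempty 𝒯]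
    (p : 𝒳 × 𝒴 → ℝ) (hp : IsPMF p)
    (hX : ∀ x, 0 < margX p x) (hY : ∀ y, 0 < margY p y)
    (s : 𝒳 → 𝒮) (t : 𝒴 → 𝒯)
    (hs : SuffS p s) (ht : SuffT p t) :
    gkCI p = gkCI (margST p s t) :=
  gacsKorner_preserved_general p hp hX hY s t hs ht

end
end

section
/- Assume the modal decomposition hypothesis holds for p with functions f_i, g_i and coefficients σ_i (0 ≤ i ≤ K). Let f : 𝒳 → ℝ and g : 𝒴 → ℝ be written as f(x) = ∑_{i=0}^K α_i·f_i(x) + r_f(x) and g(y) = ∑_{i=0}^K β_i·g_i(y) + r_g(y), where ∑_x pX(x)·r_f(x)·f_i(x) = 0 and ∑_y pY(y)·r_g(y)·g_i(y) = 0 for every 0 ≤ i ≤ K. Then ∑_{x,y} p(x,y)·(f(x) − g(y))² = ∑_{i=0}^K (α_i² − 2σ_i·α_i·β_i + β_i²) + ∑_x pX(x)·r_f(x)² + ∑_y pY(y)·r_g(y)². -/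
open Finset

noncomputable section
open scoped Classical

variable {𝒳 𝒴 𝒮 𝒯 : Type*}

/-! Write `⟨u, v⟩_w = ∑ x, w x * u x * v x`. Expanding the square gives
`E[(F - G)²] = ⟨F, F⟩_{pX} - 2 E[F G] + ⟨G, G⟩_{pY}`. Orthonormality of the `fᵢ` together with
`rf ⊥ fᵢ` yields `⟨F, fᵢ⟩ = αᵢ` and Pythagoras `⟨F, F⟩ = ∑ αᵢ² + ⟨rf, rf⟩`, likewise for `G`, and the
modal decomposition factors the cross term as `E[F G] = ∑ σᵢ ⟨F, fᵢ⟩ ⟨G, gᵢ⟩`. -/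

section WeightedInner

variable {ι κ : Type*} [Fintype ι] [Fintype κ]

def weightedInner (w u v : ι → ℝ) : ℝ := ∑ x, w x * u x * v x

theorem weightedInner_comm (w u v : ι → ℝ) : weightedInner w u v = weightedInner w v u :=
  Finset.sum_congr rfl fun _ _ => by ring

theorem weightedInner_self (w u : ι → ℝ) : weightedInner w u u = ∑ x, w x * u x ^ 2 :=
  Finset.sum_congr rfl fun _ _ => by ring

variable {w : ι → ℝ} {c : κ → ℝ} {e : κ → ι → ℝ} {r u : ι → ℝ}

theorem weightedInner_of_eq_sum_add (hu : ∀ x, u x = ∑ i, c i * e i x + r x) (v : ι → ℝ) :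
    weightedInner w u v = ∑ i, c i * weightedInner w (e i) v + weightedInner w r v := by
  simp only [weightedInner, hu, Finset.mul_sum]
  rw [Finset.sum_comm, ← Finset.sum_add_distrib]
  exact Finset.sum_congr rfl fun x _ => by
    rw [mul_add, add_mul, Finset.mul_sum, Finset.sum_mul]
    congr 1
    exact Finset.sum_congr rfl fun i _ => by ring

variable [DecidableEq κ]

theorem weightedInner_basis_of_eq_sum_add
    (horth : ∀ i j, weightedInner w (e i) (e j) = if i = j then 1 else 0)
    (hr : ∀ i, weightedInner w r (e i) = 0) (hu : ∀ x, u x = ∑ i, c i * e i x + r x)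
    (j : κ) : weightedInner w u (e j) = c j := by
  simp [weightedInner_of_eq_sum_add hu, horth, hr]

theorem weightedInner_self_of_eq_sum_add
    (horth : ∀ i j, weightedInner w (e i) (e j) = if i = j then 1 else 0)
    (hr : ∀ i, weightedInner w r (e i) = 0) (hu : ∀ x, u x = ∑ i, c i * e i x + r x) :
    weightedInner w u u = ∑ i, c i ^ 2 + weightedInner w r r := by
  have hr' : ∀ i, weightedInner w (e i) r = 0 := fun i => by rw [weightedInner_comm, hr]
  have hur : weightedInner w u r = weightedInner w r r := by
    simp [weightedInner_of_eq_sum_add hu, hr']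
  rw [weightedInner_of_eq_sum_add hu u, weightedInner_comm w r u, hur]
  simp only [weightedInner_comm w (e _) u, weightedInner_basis_of_eq_sum_add horth hr hu, sq]

end WeightedInner

section JointSums

variable {ι κ μ : Type*} [Fintype ι] [Fintype κ] [Fintype μ]

theorem sum_mul_sub_sq_eq_weightedInner (p : ι × κ → ℝ) (u : ι → ℝ) (v : κ → ℝ) :
    ∑ z, p z * (u z.1 - v z.2) ^ 2
      = weightedInner (margX p) u u - 2 * ∑ z, p z * (u z.1 * v z.2)
        + weightedInner (margY p) v v := by
  have hX : weightedInner (margX p) u u = ∑ z, p z * (u z.1 * u z.1) := by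
    simp only [weightedInner, margX, Finset.sum_mul, Fintype.sum_prod_type]
    exact Finset.sum_congr rfl fun _ _ => Finset.sum_congr rfl fun _ _ => by ring
  have hY : weightedInner (margY p) v v = ∑ z, p z * (v z.2 * v z.2) := by
    simp only [weightedInner, margY, Finset.sum_mul, Fintype.sum_prod_type_right]
    exact Finset.sum_congr rfl fun _ _ => Finset.sum_congr rfl fun _ _ => by ring
  rw [hX, hY, Finset.mul_sum, ← Finset.sum_sub_distrib, ← Finset.sum_add_distrib]
  exact Finset.sum_congr rfl fun _ _ => by ring

theorem sum_mul_mul_of_decomp (p : ι × κ → ℝ) (wX : ι → ℝ) (wY : κ → ℝ) (σ : μ → ℝ)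
    (f : μ → ι → ℝ) (g : μ → κ → ℝ)
    (hdecomp : ∀ x y, p (x, y) = wX x * wY y * ∑ i, σ i * f i x * g i y)
    (u : ι → ℝ) (v : κ → ℝ) :
    ∑ z, p z * (u z.1 * v z.2)
      = ∑ i, σ i * weightedInner wX u (f i) * weightedInner wY v (g i) := by
  simp only [weightedInner, Finset.mul_sum, Finset.sum_mul, Fintype.sum_prod_type, hdecomp]
  rw [Finset.sum_comm_cycle]
  refine Finset.sum_congr rfl fun i _ => ?_
  rw [Finset.sum_comm]
  exact Finset.sum_congr rfl fun y _ => Finset.sum_congr rfl fun x _ => by ring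

end JointSums

theorem modal_expansion_general
    [Fintype 𝒳] [Fintype 𝒴]
    (p : 𝒳 × 𝒴 → ℝ)
    (K : ℕ) (σ : Fin (K + 1) → ℝ)
    (f : Fin (K + 1) → 𝒳 → ℝ) (g : Fin (K + 1) → 𝒴 → ℝ)
    (horthf : ∀ i j, (∑ x, margX p x * f i x * f j x) = if i = j then 1 else 0)
    (horthg : ∀ i j, (∑ y, margY p y * g i y * g j y) = if i = j then 1 else 0)
    (hdecomp : ∀ x y, p (x, y) = margX p x * margY p y * ∑ i, σ i * f i x * g i y)
    (F : 𝒳 → ℝ) (G : 𝒴 → ℝ) (α β : Fin (K + 1) → ℝ) (rf : 𝒳 → ℝ) (rg : 𝒴 → ℝ)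
    (hF : ∀ x, F x = (∑ i, α i * f i x) + rf x)
    (hG : ∀ y, G y = (∑ i, β i * g i y) + rg y)
    (hrf : ∀ i, (∑ x, margX p x * rf x * f i x) = 0)
    (hrg : ∀ i, (∑ y, margY p y * rg y * g i y) = 0) :
    (∑ z : 𝒳 × 𝒴, p z * (F z.1 - G z.2) ^ 2)
      = (∑ i, (α i ^ 2 - 2 * σ i * α i * β i + β i ^ 2))
        + (∑ x, margX p x * rf x ^ 2) + (∑ y, margY p y * rg y ^ 2) := by
  rw [sum_mul_sub_sq_eq_weightedInner, sum_mul_mul_of_decomp p _ _ σ f g hdecomp,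
    weightedInner_self_of_eq_sum_add horthf hrf hF, weightedInner_self_of_eq_sum_add horthg hrg hG,
    weightedInner_self, weightedInner_self]
  simp only [weightedInner_basis_of_eq_sum_add horthf hrf hF,
    weightedInner_basis_of_eq_sum_add horthg hrg hG, Finset.sum_add_distrib,
    Finset.sum_sub_distrib, Finset.mul_sum, mul_assoc]
  ring

/-- Expansion of `E[(f(X) - g(Y))²]` via the modal decomposition. -/
theorem modal_expansion
    [Fintype 𝒳] [Nonempty 𝒳] [Fintype 𝒴] [Nonempty 𝒴]
    (p : 𝒳 × 𝒴 → ℝ) (hp : IsPMF p)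
    (hX : ∀ x, 0 < margX p x) (hY : ∀ y, 0 < margY p y)
    (K : ℕ) (σ : Fin (K + 1) → ℝ)
    (f : Fin (K + 1) → 𝒳 → ℝ) (g : Fin (K + 1) → 𝒴 → ℝ)
    (hσ0 : σ 0 = 1) (hσpos : ∀ i, 0 < σ i)
    (hf0 : ∀ x, f 0 x = 1) (hg0 : ∀ y, g 0 y = 1)
    (horthf : ∀ i j, (∑ x, margX p x * f i x * f j x) = if i = j then 1 else 0)
    (horthg : ∀ i j, (∑ y, margY p y * g i y * g j y) = if i = j then 1 else 0)
    (hdecomp : ∀ x y, p (x, y) = margX p x * margY p y * ∑ i, σ i * f i x * g i y)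
    (F : 𝒳 → ℝ) (G : 𝒴 → ℝ) (α β : Fin (K + 1) → ℝ) (rf : 𝒳 → ℝ) (rg : 𝒴 → ℝ)
    (hF : ∀ x, F x = (∑ i, α i * f i x) + rf x)
    (hG : ∀ y, G y = (∑ i, β i * g i y) + rg y)
    (hrf : ∀ i, (∑ x, margX p x * rf x * f i x) = 0)
    (hrg : ∀ i, (∑ y, margY p y * rg y * g i y) = 0) :
    (∑ z : 𝒳 × 𝒴, p z * (F z.1 - G z.2) ^ 2)
      = (∑ i, (α i ^ 2 - 2 * σ i * α i * β i + β i ^ 2))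
        + (∑ x, margX p x * rf x ^ 2) + (∑ y, margY p y * rg y ^ 2) :=
  modal_expansion_general p K σ f g horthf horthg hdecomp F G α β rf rg hF hG hrf hrg

end
end

section
/- Assume the modal decomposition hypothesis holds for p, with additionally σ_1 ≥ σ_2 ≥ … ≥ σ_K and σ_i ≤ 1 for all i; let k = max{0 ≤ i ≤ K : σ_i = 1}. Let f : 𝒳 → ℝ and g : 𝒴 → ℝ satisfy ∑_{(x,y) : f(x) ≠ g(y)} p(x,y) = 0, and write f = ∑_{i=0}^K α_i·f_i + r_f, g = ∑_{i=0}^K β_i·g_i + r_g with ∑_x pX(x)·r_f(x)·f_i(x) = 0 and ∑_y pY(y)·r_g(y)·g_i(y) = 0 for all i. Then α_i = β_i for all 0 ≤ i ≤ k; α_i = β_i = 0 for all k < i ≤ K; and r_f(x) = 0 for all x ∈ 𝒳 and r_g(y) = 0 for all y ∈ 𝒴. -/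
open Finset

noncomputable section
open scoped Classical

variable {𝒳 𝒴 𝒮 𝒯 : Type*}

/-!
Since `F(X) = G(Y)` almost surely, `E[(F(X) - G(Y))²] = 0`. Expanding this second moment in the
two orthonormal systems, with `E[f_i(X) g_j(Y)] = σ_i δ_ij` coming from the modal decomposition,
turns it into
`∑ i, (α_i² + β_i² - 2 σ_i α_i β_i) + ‖r_f‖² + ‖r_g‖²`.
For `0 ≤ σ_i ≤ 1` every mode term equals `σ_i (α_i - β_i)² + (1 - σ_i)(α_i² + β_i²) ≥ 0`, so all
terms vanish: `α_i = β_i` for `σ_i > 0`, both vanish when `σ_i < 1`, and the residuals vanish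
because the marginals are positive.
-/

section WeightedExpansion

variable {Z ι : Type*} [Fintype Z] [Fintype ι] {w : Z → ℝ} {e : ι → Z → ℝ} {c : ι → ℝ}
  {r u : Z → ℝ}

lemma sum_weight_mul_expansion (hu : ∀ z, u z = (∑ i, c i * e i z) + r z) (h : Z → ℝ) :
    ∑ z, w z * u z * h z = (∑ i, c i * ∑ z, w z * e i z * h z) + ∑ z, w z * r z * h z := by
  simp only [hu, Finset.mul_sum, Finset.sum_mul, mul_add, add_mul, Finset.sum_add_distrib]
  rw [Finset.sum_comm]
  congr 1
  exact Finset.sum_congr rfl fun _ _ => Finset.sum_congr rfl fun _ _ => by ring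

lemma sum_weight_mul_basis_eq_coeff [DecidableEq ι]
    (horth : ∀ i j, ∑ z, w z * e i z * e j z = if i = j then 1 else 0)
    (hr : ∀ i, ∑ z, w z * r z * e i z = 0) (hu : ∀ z, u z = (∑ i, c i * e i z) + r z) (j : ι) :
    ∑ z, w z * u z * e j z = c j := by
  simp [sum_weight_mul_expansion hu, horth, hr]

lemma sum_weight_mul_self_eq [DecidableEq ι]
    (horth : ∀ i j, ∑ z, w z * e i z * e j z = if i = j then 1 else 0)
    (hr : ∀ i, ∑ z, w z * r z * e i z = 0) (hu : ∀ z, u z = (∑ i, c i * e i z) + r z) :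
    ∑ z, w z * u z * u z = (∑ i, c i * c i) + ∑ z, w z * r z * r z := by
  have hsymm : ∀ a b : Z → ℝ, ∑ z, w z * a z * b z = ∑ z, w z * b z * a z := fun a b =>
    Finset.sum_congr rfl fun _ _ => by ring
  have hu_coeff : ∀ i, ∑ z, w z * e i z * u z = c i := fun i =>
    (hsymm _ _).trans (sum_weight_mul_basis_eq_coeff horth hr hu i)
  have hr_coeff : ∀ i, ∑ z, w z * e i z * r z = 0 := fun i => (hsymm _ _).trans (hr i)
  rw [sum_weight_mul_expansion hu, hsymm r u, sum_weight_mul_expansion hu]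
  simp only [hu_coeff, hr_coeff, mul_zero, Finset.sum_const_zero, zero_add]

lemma sum_weight_mul_self_nonneg (hw : ∀ z, 0 ≤ w z) : 0 ≤ ∑ z, w z * r z * r z :=
  Finset.sum_nonneg fun z _ => by rw [mul_assoc]; exact mul_nonneg (hw z) (mul_self_nonneg _)

lemma eq_zero_of_sum_weight_mul_self_eq_zero (hw : ∀ z, 0 < w z)
    (h : ∑ z, w z * r z * r z = 0) (z : Z) : r z = 0 := by
  have hz := (Finset.sum_eq_zero_iff_of_nonneg fun z _ => by
    rw [mul_assoc]; exact mul_nonneg (hw z).le (mul_self_nonneg (r z))).1 h z (Finset.mem_univ z)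
  rw [mul_assoc] at hz
  exact mul_self_eq_zero.1 ((mul_eq_zero.1 hz).resolve_left (hw z).ne')

end WeightedExpansion

section Modes

lemma mul_self_add_mul_self_sub_two_mul_eq (a b s : ℝ) :
    a * a + b * b - 2 * s * a * b = s * (a - b) ^ 2 + (1 - s) * (a * a + b * b) := by
  ring

variable {a b s : ℝ}

lemma mul_self_add_mul_self_sub_two_mul_nonneg (hs₀ : 0 ≤ s) (hs₁ : s ≤ 1) :
    0 ≤ a * a + b * b - 2 * s * a * b := by
  rw [mul_self_add_mul_self_sub_two_mul_eq]
  exact add_nonneg (mul_nonneg hs₀ (sq_nonneg _))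
    (mul_nonneg (sub_nonneg.2 hs₁) (add_nonneg (mul_self_nonneg a) (mul_self_nonneg b)))

lemma eq_of_mul_self_add_mul_self_sub_two_mul_eq_zero (hs₀ : 0 < s) (hs₁ : s ≤ 1)
    (h : a * a + b * b - 2 * s * a * b = 0) : a = b := by
  nlinarith [mul_self_nonneg (a - b), mul_self_nonneg (a + b)]

lemma eq_zero_of_mul_self_add_mul_self_sub_two_mul_eq_zero (hs₀ : 0 ≤ s) (hs₁ : s < 1)
    (h : a * a + b * b - 2 * s * a * b = 0) : a = 0 ∧ b = 0 := by
  rw [mul_self_add_mul_self_sub_two_mul_eq] at h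
  refine mul_self_add_mul_self_eq_zero.1 ((mul_eq_zero.1 ?_).resolve_left (by linarith : 1 - s ≠ 0))
  nlinarith [mul_self_nonneg a, mul_self_nonneg b, mul_nonneg hs₀ (sq_nonneg (a - b))]

end Modes

section JointSums

variable [Fintype 𝒳] [Fintype 𝒴]

lemma sum_mul_fst_eq_margX (p : 𝒳 × 𝒴 → ℝ) (u : 𝒳 → ℝ) :
    ∑ z, p z * u z.1 = ∑ x, margX p x * u x := by
  simp [Fintype.sum_prod_type, margX, Finset.sum_mul]

lemma sum_mul_snd_eq_margY (p : 𝒳 × 𝒴 → ℝ) (v : 𝒴 → ℝ) :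
    ∑ z, p z * v z.2 = ∑ y, margY p y * v y := by
  simp [Fintype.sum_prod_type_right, margY, Finset.sum_mul]

lemma sum_mul_sq_sub_eq_zero {p : 𝒳 × 𝒴 → ℝ} (hp : ∀ z, 0 ≤ p z) {F : 𝒳 → ℝ} {G : 𝒴 → ℝ}
    (hFG : (∑ z : 𝒳 × 𝒴, if F z.1 ≠ G z.2 then p z else 0) = 0) :
    ∑ z, p z * (F z.1 - G z.2) ^ 2 = 0 := by
  have hvanish := (Finset.sum_eq_zero_iff_of_nonneg fun z _ => ite_nonneg (hp z) le_rfl).1 hFG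
  refine Finset.sum_eq_zero fun z hz => ?_
  by_cases h : F z.1 = G z.2
  · rw [h, sub_self, zero_pow two_ne_zero, mul_zero]
  · have hpz : p z = 0 := by simpa [h] using hvanish z hz
    rw [hpz, zero_mul]

lemma sum_mul_mul_eq_of_decomposition {ι : Type*} [Fintype ι] {p : 𝒳 × 𝒴 → ℝ}
    {a : 𝒳 → ℝ} {b : 𝒴 → ℝ} {σ : ι → ℝ} {f : ι → 𝒳 → ℝ} {g : ι → 𝒴 → ℝ}
    (hdecomp : ∀ x y, p (x, y) = a x * b y * ∑ i, σ i * f i x * g i y) (u : 𝒳 → ℝ) (v : 𝒴 → ℝ) :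
    ∑ z, p z * u z.1 * v z.2 =
      ∑ i, σ i * (∑ x, a x * u x * f i x) * ∑ y, b y * v y * g i y := by
  simp only [Fintype.sum_prod_type, hdecomp, Finset.mul_sum, Finset.sum_mul]
  rw [Finset.sum_congr rfl fun _ _ => Finset.sum_comm, Finset.sum_comm]
  refine Finset.sum_congr rfl fun _ _ => Finset.sum_comm.trans ?_
  exact Finset.sum_congr rfl fun _ _ => Finset.sum_congr rfl fun _ _ => by ring

end JointSums

section ModalDecomposition

variable [Fintype 𝒳] [Fintype 𝒴] {ι : Type*} [Fintype ι] [DecidableEq ι] {p : 𝒳 × 𝒴 → ℝ}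
  {σ : ι → ℝ} {f : ι → 𝒳 → ℝ} {g : ι → 𝒴 → ℝ} {F : 𝒳 → ℝ} {G : 𝒴 → ℝ} {α β : ι → ℝ}
  {rf : 𝒳 → ℝ} {rg : 𝒴 → ℝ}

lemma sum_mul_sq_sub_eq_of_decomposition
    (horthf : ∀ i j, ∑ x, margX p x * f i x * f j x = if i = j then 1 else 0)
    (horthg : ∀ i j, ∑ y, margY p y * g i y * g j y = if i = j then 1 else 0)
    (hdecomp : ∀ x y, p (x, y) = margX p x * margY p y * ∑ i, σ i * f i x * g i y)
    (hF : ∀ x, F x = (∑ i, α i * f i x) + rf x) (hG : ∀ y, G y = (∑ i, β i * g i y) + rg y)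
    (hrf : ∀ i, ∑ x, margX p x * rf x * f i x = 0)
    (hrg : ∀ i, ∑ y, margY p y * rg y * g i y = 0) :
    ∑ z, p z * (F z.1 - G z.2) ^ 2 =
      (∑ i, (α i * α i + β i * β i - 2 * σ i * α i * β i)) +
        (∑ x, margX p x * rf x * rf x) + ∑ y, margY p y * rg y * rg y := by
  have hsplit : ∑ z, p z * (F z.1 - G z.2) ^ 2 = ∑ z, p z * (F z.1 * F z.1) +
      ∑ z, p z * (G z.2 * G z.2) - 2 * ∑ z, p z * F z.1 * G z.2 := by
    rw [Finset.mul_sum, ← Finset.sum_add_distrib, ← Finset.sum_sub_distrib]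
    exact Finset.sum_congr rfl fun _ _ => by ring
  rw [hsplit, sum_mul_fst_eq_margX p (fun x => F x * F x),
    sum_mul_snd_eq_margY p (fun y => G y * G y), sum_mul_mul_eq_of_decomposition hdecomp]
  simp only [← mul_assoc, sum_weight_mul_self_eq horthf hrf hF,
    sum_weight_mul_self_eq horthg hrg hG, sum_weight_mul_basis_eq_coeff horthf hrf hF,
    sum_weight_mul_basis_eq_coeff horthg hrg hG, Finset.sum_sub_distrib, Finset.sum_add_distrib,
    Finset.mul_sum]
  ring

end ModalDecomposition

theorem common_functions_characterization_general
    [Fintype 𝒳] [Fintype 𝒴]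
    (p : 𝒳 × 𝒴 → ℝ) (hp : IsPMF p)
    (hX : ∀ x, 0 < margX p x) (hY : ∀ y, 0 < margY p y)
    (K : ℕ) (σ : Fin (K + 1) → ℝ)
    (f : Fin (K + 1) → 𝒳 → ℝ) (g : Fin (K + 1) → 𝒴 → ℝ)
    (hσpos : ∀ i, 0 < σ i)
    (horthf : ∀ i j, (∑ x, margX p x * f i x * f j x) = if i = j then 1 else 0)
    (horthg : ∀ i j, (∑ y, margY p y * g i y * g j y) = if i = j then 1 else 0)
    (hdecomp : ∀ x y, p (x, y) = margX p x * margY p y * ∑ i, σ i * f i x * g i y)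
    (hσle : ∀ i, σ i ≤ 1)
    (k : Fin (K + 1)) (hkmax : ∀ i, σ i = 1 → i ≤ k)
    (F : 𝒳 → ℝ) (G : 𝒴 → ℝ) (α β : Fin (K + 1) → ℝ) (rf : 𝒳 → ℝ) (rg : 𝒴 → ℝ)
    (hF : ∀ x, F x = (∑ i, α i * f i x) + rf x)
    (hG : ∀ y, G y = (∑ i, β i * g i y) + rg y)
    (hrf : ∀ i, (∑ x, margX p x * rf x * f i x) = 0)
    (hrg : ∀ i, (∑ y, margY p y * rg y * g i y) = 0)
    (hFG : (∑ z : 𝒳 × 𝒴, if F z.1 ≠ G z.2 then p z else 0) = 0) :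
    (∀ i, i ≤ k → α i = β i) ∧
    (∀ i, k < i → α i = 0 ∧ β i = 0) ∧
    (∀ x, rf x = 0) ∧ (∀ y, rg y = 0) := by
  have henergy := sum_mul_sq_sub_eq_of_decomposition horthf horthg hdecomp hF hG hrf hrg
  rw [sum_mul_sq_sub_eq_zero hp.1 hFG] at henergy
  have hmode_nonneg : ∀ i, 0 ≤ α i * α i + β i * β i - 2 * σ i * α i * β i := fun i =>
    mul_self_add_mul_self_sub_two_mul_nonneg (hσpos i).le (hσle i)
  have hmodes_nonneg := Finset.sum_nonneg fun i (_ : i ∈ Finset.univ) => hmode_nonneg i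
  have hrf_nonneg := sum_weight_mul_self_nonneg (r := rf) fun x => (hX x).le
  have hrg_nonneg := sum_weight_mul_self_nonneg (r := rg) fun y => (hY y).le
  obtain ⟨hmodes_rf, hrg0⟩ :=
    (add_eq_zero_iff_of_nonneg (add_nonneg hmodes_nonneg hrf_nonneg) hrg_nonneg).1 henergy.symm
  obtain ⟨hmodes, hrf0⟩ := (add_eq_zero_iff_of_nonneg hmodes_nonneg hrf_nonneg).1 hmodes_rf
  have hmode i := (Finset.sum_eq_zero_iff_of_nonneg fun i _ => hmode_nonneg i).1 hmodes i
    (Finset.mem_univ i)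
  refine ⟨fun i _ => eq_of_mul_self_add_mul_self_sub_two_mul_eq_zero (hσpos i) (hσle i) (hmode i),
    fun i hki => ?_, eq_zero_of_sum_weight_mul_self_eq_zero hX hrf0,
    eq_zero_of_sum_weight_mul_self_eq_zero hY hrg0⟩
  have hσlt : σ i < 1 := (hσle i).lt_of_ne fun h => (hkmax i h).not_gt hki
  exact eq_zero_of_mul_self_add_mul_self_sub_two_mul_eq_zero (hσpos i).le hσlt (hmode i)

/-- If `P(f(X) = g(Y)) = 1`, the modal-decomposition coefficients of
`f` and `g` agree on the modes with `σ_i = 1` and vanish elsewhere. -/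
theorem common_functions_characterization
    [Fintype 𝒳] [Nonempty 𝒳] [Fintype 𝒴] [Nonempty 𝒴]
    (p : 𝒳 × 𝒴 → ℝ) (hp : IsPMF p)
    (hX : ∀ x, 0 < margX p x) (hY : ∀ y, 0 < margY p y)
    (K : ℕ) (σ : Fin (K + 1) → ℝ)
    (f : Fin (K + 1) → 𝒳 → ℝ) (g : Fin (K + 1) → 𝒴 → ℝ)
    (hσ0 : σ 0 = 1) (hσpos : ∀ i, 0 < σ i)
    (hf0 : ∀ x, f 0 x = 1) (hg0 : ∀ y, g 0 y = 1)
    (horthf : ∀ i j, (∑ x, margX p x * f i x * f j x) = if i = j then 1 else 0)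
    (horthg : ∀ i j, (∑ y, margY p y * g i y * g j y) = if i = j then 1 else 0)
    (hdecomp : ∀ x y, p (x, y) = margX p x * margY p y * ∑ i, σ i * f i x * g i y)
    (hσle : ∀ i, σ i ≤ 1)
    (hσmono : ∀ i j : Fin (K + 1), 1 ≤ (i : ℕ) → i ≤ j → σ j ≤ σ i)
    (k : Fin (K + 1)) (hk1 : σ k = 1) (hkmax : ∀ i, σ i = 1 → i ≤ k)
    (F : 𝒳 → ℝ) (G : 𝒴 → ℝ) (α β : Fin (K + 1) → ℝ) (rf : 𝒳 → ℝ) (rg : 𝒴 → ℝ)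
    (hF : ∀ x, F x = (∑ i, α i * f i x) + rf x)
    (hG : ∀ y, G y = (∑ i, β i * g i y) + rg y)
    (hrf : ∀ i, (∑ x, margX p x * rf x * f i x) = 0)
    (hrg : ∀ i, (∑ y, margY p y * rg y * g i y) = 0)
    (hFG : (∑ z : 𝒳 × 𝒴, if F z.1 ≠ G z.2 then p z else 0) = 0) :
    (∀ i, i ≤ k → α i = β i) ∧
    (∀ i, k < i → α i = 0 ∧ β i = 0) ∧
    (∀ x, rf x = 0) ∧ (∀ y, rg y = 0) :=
  common_functions_characterization_general p hp hX hY K σ f g hσpos horthf horthg hdecomp hσle k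
    hkmax F G α β rf rg hF hG hrf hrg hFG

end
end

section
/- Assume the modal decomposition hypothesis holds for p, with additionally σ_1 ≥ σ_2 ≥ … ≥ σ_K and σ_i ≤ 1 for all i; let k = max{0 ≤ i ≤ K : σ_i = 1}. Then the Gács–Körner common information of p equals the Shannon entropy of the pushforward of pX under the map x ↦ (f_0(x), f_1(x), …, f_k(x)) ∈ ℝ^{k+1}: C_GK(p) = H( (f_0,…,f_k)♯pX ). -/
open Finset

noncomputable section
open scoped Classical

variable {𝒳 𝒴 𝒮 𝒯 : Type*}

/-- Shannon entropy of the pushforward of a finitely supported pmf `r` on `A`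
under a map `φ : A → W`. -/
def entropyPush {A W : Type*} [Fintype A] (φ : A → W) (r : A → ℝ) : ℝ :=
  -∑ w ∈ Finset.image φ Finset.univ,
    if 0 < ∑ a ∈ Finset.univ.filter (fun a => φ a = w), r a then
      (∑ a ∈ Finset.univ.filter (fun a => φ a = w), r a)
        * Real.log (∑ a ∈ Finset.univ.filter (fun a => φ a = w), r a)
    else 0

/-! For `σᵢ = 1` the identity `E (fᵢ(X) - gᵢ(Y))² = 2 - 2σᵢ` forces `fᵢ(X) = gᵢ(Y)` almost surely,
so `φ = (f₀, …, f_k)` is a common function of `X` and `Y`. Conversely, if `a(X) = b(Y)` almost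
surely, the two conditional expectation operators, which by the modal decomposition send
`fᵢ ↦ σᵢ gᵢ` and `gᵢ ↦ σᵢ fᵢ`, fix `a` and `b`; hence `a = ∑ σᵢ² ⟨a, fᵢ⟩ fᵢ`, and comparing
coefficients kills every component with `σᵢ ≠ 1`. So every common function factors through `φ`,
and since coarsening a variable can only lower its entropy, `φ` attains the supremum defining
`C_GK`. -/

section Entropy

variable {A B W : Type*} [Fintype A]

lemma entropyPush_eq_neg_sum_mul_log_fiber (φ : A → W) {r : A → ℝ} (hr : ∀ a, 0 ≤ r a) :
    entropyPush φ r
      = -∑ a, r a * Real.log (∑ a' ∈ univ.filter (fun a' => φ a' = φ a), r a') := by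
  unfold entropyPush
  congr 1
  rw [← sum_fiberwise_of_maps_to (g := φ) (fun a _ => mem_image_of_mem φ (mem_univ a))]
  refine sum_congr rfl fun w _ => ?_
  have hfiber : ∀ a ∈ univ.filter (fun a => φ a = w),
      r a * Real.log (∑ a' ∈ univ.filter (fun a' => φ a' = φ a), r a')
        = r a * Real.log (∑ a' ∈ univ.filter (fun a' => φ a' = w), r a') := by
    intro a ha
    rw [(mem_filter.1 ha).2]
  rw [sum_congr rfl hfiber, ← sum_mul]
  rcases (sum_nonneg fun a _ => hr a : 0 ≤ ∑ a ∈ univ.filter (fun a => φ a = w), r a).eq_or_lt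
    with h | h
  · simp [← h]
  · simp [h]

lemma entropyPush_le_of_factors {φ : A → W} {s : A → B} (hs : ∀ a a', φ a = φ a' → s a = s a')
    {r : A → ℝ} (hr : ∀ a, 0 ≤ r a) : entropyPush s r ≤ entropyPush φ r := by
  rw [entropyPush_eq_neg_sum_mul_log_fiber s hr, entropyPush_eq_neg_sum_mul_log_fiber φ hr,
    neg_le_neg_iff]
  refine sum_le_sum fun a _ => ?_
  rcases (hr a).eq_or_lt with h | h
  · simp [← h]
  have hsub : univ.filter (fun a' => φ a' = φ a) ⊆ univ.filter (fun a' => s a' = s a) :=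
    fun a' ha' => mem_filter.2 ⟨mem_univ a', hs a' a (mem_filter.1 ha').2⟩
  have hpos : 0 < ∑ a' ∈ univ.filter (fun a' => φ a' = φ a), r a' :=
    h.trans_le (single_le_sum (fun a' _ => hr a') (mem_filter.2 ⟨mem_univ a, rfl⟩))
  exact mul_le_mul_of_nonneg_left
    (Real.log_le_log hpos (sum_le_sum_of_subset_of_nonneg hsub fun a' _ _ => hr a')) h.le

lemma entropyPush_congr_fibers {φ : A → W} {s : A → B} (hs : ∀ a a', s a = s a' ↔ φ a = φ a')
    {r : A → ℝ} (hr : ∀ a, 0 ≤ r a) : entropyPush s r = entropyPush φ r :=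
  le_antisymm (entropyPush_le_of_factors (fun a a' => (hs a a').2) hr)
    (entropyPush_le_of_factors (fun a a' => (hs a a').1) hr)

lemma entropy_pushforward_eq_entropyPush [Fintype B] [DecidableEq B] (s : A → B) (r : A → ℝ) :
    entropy (fun b : B => ∑ a ∈ univ.filter (fun a => s a = b), r a) = entropyPush s r := by
  unfold entropy entropyPush
  congr 1
  symm
  convert sum_subset (subset_univ (univ.image s)) ?_ using 1
  · congr! -- the two sides carry different `DecidableEq B` instances
  intro b _ hb
  have hempty : univ.filter (fun a => s a = b) = ∅ :=
    filter_eq_empty_iff.2 fun a _ has => hb (has ▸ mem_image_of_mem s (mem_univ a))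
  simp [hempty]

end Entropy

lemma exists_fin_encoding {A B W : Type*} [Fintype A] [Fintype B] (φ : A → W) (ψ : B → W) :
    ∃ (n : ℕ) (s : A → Fin n) (t : B → Fin n),
      (∀ a a', s a = s a' ↔ φ a = φ a') ∧ ∀ a b, s a = t b ↔ φ a = ψ b := by
  set S := univ.image φ ∪ univ.image ψ
  refine ⟨S.card, fun a => S.equivFin ⟨φ a, by simp [S]⟩, fun b => S.equivFin ⟨ψ b, by simp [S]⟩,
    ?_, ?_⟩ <;> simp

lemma sum_ite_ne_eq_zero_iff {A B W : Type*} [Fintype A] [Fintype B] [DecidableEq W]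
    {m : A × B → ℝ} (hm : ∀ z, 0 ≤ m z) (s : A → W) (t : B → W) :
    (∑ z : A × B, if s z.1 ≠ t z.2 then m z else 0) = 0 ↔ ∀ a b, 0 < m (a, b) → s a = t b := by
  rw [sum_eq_zero_iff_of_nonneg fun z _ => by split_ifs <;> simp [hm z]]
  refine ⟨fun h a b hab => by_contra fun hne => ?_, fun h z _ => ?_⟩
  · simpa [hne, hab.ne'] using h (a, b) (mem_univ _)
  · rcases (hm z).eq_or_lt with h0 | hpos
    · simp [← h0]
    · simp [h z.1 z.2 hpos]

theorem gkCI_eq_entropyPush {A B W : Type*} [Fintype A] [Fintype B] {m : A × B → ℝ}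
    (hm : ∀ z, 0 ≤ m z) (φ : A → W) (ψ : B → W) (hcommon : ∀ a b, 0 < m (a, b) → φ a = ψ b)
    (hmax : ∀ (n : ℕ) (s : A → Fin n) (t : B → Fin n), (∀ a b, 0 < m (a, b) → s a = t b) →
      ∀ a a', φ a = φ a' → s a = s a') :
    gkCI m = entropyPush φ (fun a => ∑ b, m (a, b)) := by
  have hmX : ∀ a, 0 ≤ ∑ b, m (a, b) := fun a => sum_nonneg fun b _ => hm (a, b)
  refine IsGreatest.csSup_eq ⟨?_, ?_⟩
  · obtain ⟨n, s, t, hs, hst⟩ := exists_fin_encoding φ ψ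
    refine ⟨n, s, t, (sum_ite_ne_eq_zero_iff hm s t).2 fun a b hab => (hst a b).2 (hcommon a b hab),
      ?_⟩
    rw [entropy_pushforward_eq_entropyPush, entropyPush_congr_fibers hs hmX]
  · rintro c ⟨n, s, t, hst, rfl⟩
    rw [entropy_pushforward_eq_entropyPush]
    exact entropyPush_le_of_factors (hmax n s t ((sum_ite_ne_eq_zero_iff hm s t).1 hst)) hmX

lemma sum_mul_sum_mul_of_orthonormal {X ι : Type*} [Fintype X] [Fintype ι] [DecidableEq ι]
    {w : X → ℝ} {e : ι → X → ℝ} (he : ∀ i j, ∑ x, w x * e i x * e j x = if i = j then 1 else 0)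
    (c : ι → ℝ) (i : ι) : ∑ x, w x * (∑ j, c j * e j x) * e i x = c i := by
  calc ∑ x, w x * (∑ j, c j * e j x) * e i x = ∑ j, c j * ∑ x, w x * e j x * e i x := by
        simp_rw [mul_sum, sum_mul]
        rw [sum_comm]
        exact sum_congr rfl fun j _ => sum_congr rfl fun x _ => by ring
    _ = c i := by simp [he]

structure ModalDecomposition {ι : Type*} [Fintype ι] [DecidableEq ι] [Fintype 𝒳] [Fintype 𝒴]
    (p : 𝒳 × 𝒴 → ℝ) (σ : ι → ℝ) (f : ι → 𝒳 → ℝ) (g : ι → 𝒴 → ℝ) : Prop where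
  orthonormal_left : ∀ i j, ∑ x, margX p x * f i x * f j x = if i = j then 1 else 0
  orthonormal_right : ∀ i j, ∑ y, margY p y * g i y * g j y = if i = j then 1 else 0
  decomp : ∀ x y, p (x, y) = margX p x * margY p y * ∑ i, σ i * f i x * g i y

namespace ModalDecomposition

variable {ι : Type*} [Fintype ι] [DecidableEq ι] [Fintype 𝒳] [Fintype 𝒴] {p : 𝒳 × 𝒴 → ℝ}
  {σ : ι → ℝ} {f : ι → 𝒳 → ℝ} {g : ι → 𝒴 → ℝ}

lemma swap (h : ModalDecomposition p σ f g) : ModalDecomposition (fun z => p z.swap) σ g f where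
  orthonormal_left := h.orthonormal_right
  orthonormal_right := h.orthonormal_left
  decomp y x := by
    change p (x, y) = margY p y * margX p x * ∑ i, σ i * g i y * f i x
    rw [h.decomp x y, mul_comm (margX p x)]
    exact congrArg _ (sum_congr rfl fun i _ => by ring)

lemma sum_mul_snd (h : ModalDecomposition p σ f g) (x : 𝒳) (b : 𝒴 → ℝ) :
    ∑ y, p (x, y) * b y = margX p x * ∑ j, σ j * (∑ y, margY p y * b y * g j y) * f j x := by
  simp_rw [h.decomp x, mul_sum, sum_mul]
  rw [sum_comm]
  refine sum_congr rfl fun j _ => ?_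
  rw [mul_sum]
  exact sum_congr rfl fun y _ => by ring

lemma sum_mul_fst (h : ModalDecomposition p σ f g) (y : 𝒴) (a : 𝒳 → ℝ) :
    ∑ x, p (x, y) * a x = margY p y * ∑ j, σ j * (∑ x, margX p x * a x * f j x) * g j y :=
  h.swap.sum_mul_snd y a

lemma sum_mul_snd_basis (h : ModalDecomposition p σ f g) (x : 𝒳) (i : ι) :
    ∑ y, p (x, y) * g i y = σ i * margX p x * f i x := by
  rw [h.sum_mul_snd]
  simp [h.orthonormal_right]
  ring

lemma sum_sum_mul_sub_sq (h : ModalDecomposition p σ f g) (i : ι) :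
    ∑ x, ∑ y, p (x, y) * (f i x - g i y) ^ 2 = 2 - 2 * σ i := by
  have hf : ∑ x, margX p x * f i x * f i x = 1 := by simp [h.orthonormal_left]
  have hg : ∑ y, margY p y * g i y * g i y = 1 := by simp [h.orthonormal_right]
  calc ∑ x, ∑ y, p (x, y) * (f i x - g i y) ^ 2
      = ∑ x, (margX p x * f i x * f i x - 2 * f i x * ∑ y, p (x, y) * g i y)
        + ∑ y, ∑ x, p (x, y) * (g i y * g i y) := by
        rw [sum_comm (f := fun y x => p (x, y) * (g i y * g i y)), ← sum_add_distrib]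
        refine sum_congr rfl fun x _ => ?_
        simp only [margX, sum_mul, mul_sum, ← sum_sub_distrib, ← sum_add_distrib]
        exact sum_congr rfl fun y _ => by ring
    _ = (1 - 2 * σ i) * ∑ x, margX p x * f i x * f i x + ∑ y, margY p y * g i y * g i y := by
        simp only [h.sum_mul_snd_basis, margY, mul_sum, sum_mul]
        congr 1
        · exact sum_congr rfl fun x _ => by ring
        · exact sum_congr rfl fun y _ => sum_congr rfl fun x _ => by ring
    _ = 2 - 2 * σ i := by rw [hf, hg]; ring

lemma apply_eq_of_singularValue_eq_one (h : ModalDecomposition p σ f g) (hp : ∀ z, 0 ≤ p z)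
    {i : ι} (hσi : σ i = 1) {x : 𝒳} {y : 𝒴} (hxy : 0 < p (x, y)) : f i x = g i y := by
  have hzero := h.sum_sum_mul_sub_sq i
  rw [hσi, show (2 : ℝ) - 2 * 1 = 0 by norm_num,
    sum_eq_zero_iff_of_nonneg fun x _ => sum_nonneg fun y _ => mul_nonneg (hp _) (sq_nonneg _)]
    at hzero
  have hxy0 := (sum_eq_zero_iff_of_nonneg fun y _ => mul_nonneg (hp _) (sq_nonneg _)).1
    (hzero x (mem_univ x)) y (mem_univ y)
  rw [mul_eq_zero, or_iff_right hxy.ne', sq_eq_zero_iff, sub_eq_zero] at hxy0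
  exact hxy0

section AgreeOnSupport

variable (h : ModalDecomposition p σ f g) (hp : ∀ z, 0 ≤ p z) {a : 𝒳 → ℝ} {b : 𝒴 → ℝ}
  (hab : ∀ x y, 0 < p (x, y) → a x = b y)
include h hp hab

lemma fst_eq_sum_of_agree (hX : ∀ x, 0 < margX p x) (x : 𝒳) :
    a x = ∑ j, σ j * (∑ y, margY p y * b y * g j y) * f j x := by
  refine mul_left_cancel₀ (hX x).ne' ?_
  rw [← h.sum_mul_snd, margX, sum_mul]
  refine sum_congr rfl fun y _ => ?_
  rcases (hp (x, y)).eq_or_lt with h0 | hpos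
  · simp [← h0]
  · rw [hab x y hpos]

lemma snd_eq_sum_of_agree (hY : ∀ y, 0 < margY p y) (y : 𝒴) :
    b y = ∑ j, σ j * (∑ x, margX p x * a x * f j x) * g j y :=
  h.swap.fst_eq_sum_of_agree (fun z => hp z.swap) (fun y x hyx => (hab x y hyx).symm) hY y

lemma coeff_snd_eq_of_agree (hY : ∀ y, 0 < margY p y) (j : ι) :
    ∑ y, margY p y * b y * g j y = σ j * ∑ x, margX p x * a x * f j x := by
  simp_rw [h.snd_eq_sum_of_agree hp hab hY]
  exact sum_mul_sum_mul_of_orthonormal h.orthonormal_right _ j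

lemma coeff_fst_eq_zero_of_agree (hX : ∀ x, 0 < margX p x) (hY : ∀ y, 0 < margY p y)
    (hσ : ∀ i, 0 < σ i) {i : ι} (hi : σ i ≠ 1) : ∑ x, margX p x * a x * f i x = 0 := by
  set α := ∑ x, margX p x * a x * f i x
  have hα : α = σ i * (σ i * α) := by
    calc α = ∑ x, margX p x * (∑ j, σ j * (∑ y, margY p y * b y * g j y) * f j x) * f i x := by
          simp_rw [α, ← h.fst_eq_sum_of_agree hp hab hX]
      _ = σ i * (σ i * α) := by
          rw [sum_mul_sum_mul_of_orthonormal h.orthonormal_left, h.coeff_snd_eq_of_agree hp hab hY]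
  have hσi : (σ i - 1) * (σ i + 1) ≠ 0 :=
    mul_ne_zero (sub_ne_zero.2 hi) (by linarith [hσ i])
  have : α * ((σ i - 1) * (σ i + 1)) = 0 := by linear_combination -hα
  exact (mul_eq_zero.1 this).resolve_right hσi

lemma apply_eq_of_agree (hX : ∀ x, 0 < margX p x) (hY : ∀ y, 0 < margY p y)
    (hσ : ∀ i, 0 < σ i) {x x' : 𝒳} (hxx' : ∀ i, σ i = 1 → f i x = f i x') : a x = a x' := by
  rw [h.fst_eq_sum_of_agree hp hab hX x, h.fst_eq_sum_of_agree hp hab hX x']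
  refine sum_congr rfl fun j _ => ?_
  by_cases hj : σ j = 1
  · rw [hxx' j hj]
  · rw [h.coeff_snd_eq_of_agree hp hab hY, h.coeff_fst_eq_zero_of_agree hp hab hX hY hσ hj]
    ring

end AgreeOnSupport

lemma map_eq_of_agree {V : Type*} (h : ModalDecomposition p σ f g) (hp : ∀ z, 0 ≤ p z)
    (hX : ∀ x, 0 < margX p x) (hY : ∀ y, 0 < margY p y) (hσ : ∀ i, 0 < σ i)
    {s : 𝒳 → V} {t : 𝒴 → V} (hst : ∀ x y, 0 < p (x, y) → s x = t y) {x x' : 𝒳}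
    (hxx' : ∀ i, σ i = 1 → f i x = f i x') : s x = s x' := by
  have hind := h.apply_eq_of_agree hp (a := fun z => if s z = s x then 1 else 0)
    (b := fun y => if t y = s x then 1 else 0) (fun x y hxy => by simp [hst x y hxy]) hX hY hσ hxx'
  by_contra hne
  simp [Ne.symm hne] at hind

end ModalDecomposition

theorem gacsKorner_eq_entropy_general
    [Fintype 𝒳] [Fintype 𝒴]
    (p : 𝒳 × 𝒴 → ℝ) (hp : IsPMF p)
    (hX : ∀ x, 0 < margX p x) (hY : ∀ y, 0 < margY p y)
    (K : ℕ) (σ : Fin (K + 1) → ℝ)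
    (f : Fin (K + 1) → 𝒳 → ℝ) (g : Fin (K + 1) → 𝒴 → ℝ)
    (hσ0 : σ 0 = 1) (hσpos : ∀ i, 0 < σ i)
    (horthf : ∀ i j, (∑ x, margX p x * f i x * f j x) = if i = j then 1 else 0)
    (horthg : ∀ i j, (∑ y, margY p y * g i y * g j y) = if i = j then 1 else 0)
    (hdecomp : ∀ x y, p (x, y) = margX p x * margY p y * ∑ i, σ i * f i x * g i y)
    (hσle : ∀ i, σ i ≤ 1)
    (hσmono : ∀ i j : Fin (K + 1), 1 ≤ (i : ℕ) → i ≤ j → σ j ≤ σ i)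
    (k : Fin (K + 1)) (hk1 : σ k = 1) (hkmax : ∀ i, σ i = 1 → i ≤ k) :
    gkCI p
      = entropyPush
          (fun x => fun i : Fin ((k : ℕ) + 1) => f (Fin.castLE k.isLt i) x)
          (margX p) := by
  have h : ModalDecomposition p σ f g := ⟨horthf, horthg, hdecomp⟩
  have hσ_eq_one : ∀ i, i ≤ k → σ i = 1 := by
    intro i hik
    rcases Nat.eq_zero_or_pos i with hi | hi
    · rwa [Fin.val_eq_zero_iff.1 hi]
    · exact le_antisymm (hσle i) (hk1 ▸ hσmono i k hi hik)
  refine gkCI_eq_entropyPush hp.1 _ (fun y i => g (Fin.castLE k.isLt i) y) ?_ ?_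
  · intro x y hxy
    funext i
    exact h.apply_eq_of_singularValue_eq_one hp.1 (hσ_eq_one _ (Nat.le_of_lt_succ i.isLt)) hxy
  · intro n s t hst x x' hxx'
    exact h.map_eq_of_agree hp.1 hX hY hσpos hst fun i hi =>
      congrFun hxx' ⟨i, Nat.lt_succ_of_le (hkmax i hi)⟩

/-- The Gács–Körner common information equals the entropy of
`(f_0(X), …, f_k(X))`, where `k` is the index of the last unit singular value. -/
theorem gacsKorner_eq_entropy
    [Fintype 𝒳] [Nonempty 𝒳] [Fintype 𝒴] [Nonempty 𝒴]
    (p : 𝒳 × 𝒴 → ℝ) (hp : IsPMF p)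
    (hX : ∀ x, 0 < margX p x) (hY : ∀ y, 0 < margY p y)
    (K : ℕ) (σ : Fin (K + 1) → ℝ)
    (f : Fin (K + 1) → 𝒳 → ℝ) (g : Fin (K + 1) → 𝒴 → ℝ)
    (hσ0 : σ 0 = 1) (hσpos : ∀ i, 0 < σ i)
    (hf0 : ∀ x, f 0 x = 1) (hg0 : ∀ y, g 0 y = 1)
    (horthf : ∀ i j, (∑ x, margX p x * f i x * f j x) = if i = j then 1 else 0)
    (horthg : ∀ i j, (∑ y, margY p y * g i y * g j y) = if i = j then 1 else 0)
    (hdecomp : ∀ x y, p (x, y) = margX p x * margY p y * ∑ i, σ i * f i x * g i y)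
    (hσle : ∀ i, σ i ≤ 1)
    (hσmono : ∀ i j : Fin (K + 1), 1 ≤ (i : ℕ) → i ≤ j → σ j ≤ σ i)
    (k : Fin (K + 1)) (hk1 : σ k = 1) (hkmax : ∀ i, σ i = 1 → i ≤ k) :
    gkCI p
      = entropyPush
          (fun x => fun i : Fin ((k : ℕ) + 1) => f (Fin.castLE k.isLt i) x)
          (margX p) :=
  gacsKorner_eq_entropy_general p hp hX hY K σ f g hσ0 hσpos horthf horthg hdecomp hσle hσmono k hk1
    hkmax

end
end
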